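/- arXiv:2310.02731 — 7 statements merged into one kernel-verified Lean document; each statement's English description precedes it below -/
import Mathlib

section
/- Let a Boolean control network with m inputs, n state variables, and m outputs be given by f : (Fin m → Bool) → (Fin n → Bool) → (Fin n → Bool) and h : Fin m → (Fin n → Bool) → Bool, and assume that for every i : Fin m the output map h i is surjective. For i : Fin m and j k : Bool define the set S i j k := { h i (f u x) | x : Fin n → Bool with h i x = j, u : Fin m → Bool with u i = k } ⊆ Bool (the set of possible next values of output i given current output value j and i-th input value k). Then the BCN is one-step transition IO-decoupled in the sense of Definition 2 if and only if for every i : Fin m, every j : Bool, and every value v : Bool there is exactly one k : Bool such that v ∈ S i j k (this is the matrix condition (δ₂ʲ)ᵀ Ξⁱ 1₂ = 1₂ of the paper). -/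
/-- With every output map surjective, one-step transition IO-decoupling
(Definition 2) holds iff for every output index `i`, current output value `j` and
every value `v`, there is exactly one input value `k` such that `v` is a possible
next value of output `i` (the matrix condition `(δ₂ʲ)ᵀ Ξⁱ 1₂ = 1₂`). -/
theorem stmt_0 (m n : ℕ)
    (f : (Fin m → Bool) → (Fin n → Bool) → (Fin n → Bool))
    (h : Fin m → (Fin n → Bool) → Bool)
    (hsurj : ∀ i : Fin m, Function.Surjective (h i)) :
    (∀ (i : Fin m) (x x' : Fin n → Bool) (u u' : Fin m → Bool),
        h i x = h i x' → (h i (f u x) = h i (f u' x') ↔ u i = u' i)) ↔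
    (∀ (i : Fin m) (j v : Bool), ∃! k : Bool,
        v ∈ {y : Bool | ∃ (x : Fin n → Bool) (u : Fin m → Bool),
              h i x = j ∧ u i = k ∧ h i (f u x) = y}) := by
  constructor
  · intro H i j v
    obtain ⟨x0, hx0⟩ := hsurj i j
    set w := h i (f (fun _ => false) x0) with hw
    by_cases hvw : v = w
    · refine ⟨false, ⟨x0, fun _ => false, hx0, rfl, hvw ▸ rfl⟩, ?_⟩
      rintro k ⟨x, u, hx, hu, hfu⟩
      have := (H i x x0 u (fun _ => false) (hx.trans hx0.symm)).mp
        (by rw [hfu, ← hw, hvw])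
      simpa [hu] using this
    · have hne : h i (f (fun _ => true) x0) ≠ w := by
        intro hcontra
        have := (H i x0 x0 (fun _ => true) (fun _ => false) rfl).mp (hcontra.trans hw.symm ▸ hcontra)
        simp at this
      have heq : h i (f (fun _ => true) x0) = v := by
        cases hb : h i (f (fun _ => true) x0) <;> cases hc : w <;> cases v <;> simp_all
      refine ⟨true, ⟨x0, fun _ => true, hx0, rfl, heq⟩, ?_⟩
      rintro k ⟨x, u, hx, hu, hfu⟩
      have := (H i x x0 u (fun _ => true) (hx.trans hx0.symm)).mp (hfu.trans heq.symm)
      simpa [hu] using this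
  · intro H i x x' u u' hxx'
    constructor
    · intro hff
      obtain ⟨k, hk, huniq⟩ := H i (h i x) (h i (f u x))
      have h1 := huniq (u i) ⟨x, u, rfl, rfl, rfl⟩
      have h2 := huniq (u' i) ⟨x', u', hxx'.symm, rfl, hff.symm⟩
      rw [h1, h2]
    · intro huu'
      by_contra hne
      have hv' : h i (f u' x') = !(h i (f u x)) := by
        cases h1 : h i (f u x) <;> cases h2 : h i (f u' x') <;> simp_all
      set w := h i (f (fun _ => !(u i)) x) with hwdef
      obtain ⟨k, hk, huniq⟩ := H i (h i x) w
      have h1 := huniq (!(u i)) ⟨x, fun _ => !(u i), rfl, rfl, rfl⟩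
      by_cases hw : w = h i (f u x)
      · have h2 := huniq (u i) ⟨x, u, rfl, rfl, hw.symm⟩
        rw [h2] at h1; simp at h1
      · have hw2 : w = h i (f u' x') := by
          rw [hv']; exact Bool.eq_not_iff.mpr hw
        have h2 := huniq (u' i) ⟨x', u', hxx'.symm, rfl, hw2.symm⟩
        rw [← h2, ← huu'] at h1; simp at h1
end

section
/- Let a Boolean control network with m inputs, n state variables, and m outputs be given by f : (Fin m → Bool) → (Fin n → Bool) → (Fin n → Bool) and h : Fin m → (Fin n → Bool) → Bool. The BCN is one-step transition IO-decoupled in the sense of Definition 2 if and only if for every i : Fin m there exists a map g_i : Bool → Bool → Bool such that for every j : Bool the section g_i j : Bool → Bool is injective, and for every input u and state x one has h i (f u x) = g_i (h i x) (u i) (i.e., the i-th output at the next time step is an explicit function of the current i-th output and the current i-th input alone, and that function is injective in the input). -/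
/-- One-step transition IO-decoupling (Definition 2) holds iff each
output's next value is an explicit function of the current same-index output and
input alone, injective in the input. -/
theorem stmt_1 (m n : ℕ)
    (f : (Fin m → Bool) → (Fin n → Bool) → (Fin n → Bool))
    (h : Fin m → (Fin n → Bool) → Bool) :
    (∀ (i : Fin m) (x x' : Fin n → Bool) (u u' : Fin m → Bool),
        h i x = h i x' → (h i (f u x) = h i (f u' x') ↔ u i = u' i)) ↔
    (∀ i : Fin m, ∃ g : Bool → Bool → Bool,
        (∀ j : Bool, Function.Injective (g j)) ∧
        ∀ (u : Fin m → Bool) (x : Fin n → Bool), h i (f u x) = g (h i x) (u i)) := by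
  constructor
  · intro H i
    refine ⟨fun j b => if hx : ∃ x, h i x = j then h i (f (fun _ => b) (Classical.choose hx))
      else b, ?_, ?_⟩
    · intro j
      by_cases hx : ∃ x, h i x = j
      · intro a b hab
        simp only [dif_pos hx] at hab
        exact ((H i (Classical.choose hx) (Classical.choose hx) (fun _ => a) (fun _ => b)
          rfl).mp hab)
      · intro a b hab
        simpa only [dif_neg hx] using hab
    · intro u x
      have hx : ∃ x', h i x' = h i x := ⟨x, rfl⟩
      simp only [dif_pos hx]
      exact (H i x (Classical.choose hx) u (fun _ => u i)
        (Classical.choose_spec hx).symm).mpr rfl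
  · intro H i x x' u u' hxx'
    obtain ⟨g, hg, hgs⟩ := H i
    rw [hgs u x, hgs u' x', hxx']
    exact ⟨fun hh => hg _ hh, fun hh => by rw [hh]⟩
end

section
/- Let a Boolean control network with m inputs, n state variables, and m outputs be given by f : (Fin m → Bool) → (Fin n → Bool) → (Fin n → Bool) and h : Fin m → (Fin n → Bool) → Bool, and assume it is one-step transition IO-decoupled in the sense of Definition 2. Then for every state x the map (Fin m → Bool) → (Fin m → Bool) sending an input u to the next output vector (fun i => h i (f u x)) is a bijection. In particular, the BCN is fully output controllable in one step: for every state x and every target output vector η : Fin m → Bool there exists an input u with h i (f u x) = η i for all i. -/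
/-- If the BCN is one-step transition IO-decoupled (Definition 2),
then for every state the map from inputs to next output vectors is a bijection;
in particular the BCN is fully output controllable in one step. -/
theorem stmt_2 (m n : ℕ)
    (f : (Fin m → Bool) → (Fin n → Bool) → (Fin n → Bool))
    (h : Fin m → (Fin n → Bool) → Bool)
    (hdec : ∀ (i : Fin m) (x x' : Fin n → Bool) (u u' : Fin m → Bool),
        h i x = h i x' → (h i (f u x) = h i (f u' x') ↔ u i = u' i)) :
    (∀ x : Fin n → Bool,
        Function.Bijective (fun u : Fin m → Bool => (fun i => h i (f u x) : Fin m → Bool))) ∧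
    (∀ (x : Fin n → Bool) (η : Fin m → Bool), ∃ u : Fin m → Bool, ∀ i, h i (f u x) = η i) := by
  have hbij : ∀ x : Fin n → Bool,
      Function.Bijective (fun u : Fin m → Bool => (fun i => h i (f u x) : Fin m → Bool)) := by
    intro x
    have hinj : Function.Injective
        (fun u : Fin m → Bool => (fun i => h i (f u x) : Fin m → Bool)) := by
      intro u u' huu
      funext i
      exact (hdec i x x u u' rfl).mp (congrFun huu i)
    exact (Finite.injective_iff_bijective).mp hinj
  refine ⟨hbij, fun x η => ?_⟩
  obtain ⟨u, hu⟩ := (hbij x).surjective η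
  exact ⟨u, fun i => congrFun hu i⟩
end

section
/- Let a Boolean control network with m inputs, n state variables, and p outputs be given by f : (Fin m → Bool) → (Fin n → Bool) → (Fin n → Bool) and h : Fin p → (Fin n → Bool) → Bool. If m < p, then there exists no state feedback K : (Fin n → Bool) → (Fin p → Bool) → (Fin m → Bool) such that the closed-loop BCN (which has p inputs and p outputs) is one-step transition IO-decoupled in the sense of Definition 2. -/
/-- If `m < p` then no state feedback can render the closed-loop
BCN one-step transition IO-decoupled in the sense of Definition 2. -/
theorem stmt_8 (m n p : ℕ) (hmp : m < p)
    (f : (Fin m → Bool) → (Fin n → Bool) → (Fin n → Bool))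
    (h : Fin p → (Fin n → Bool) → Bool) :
    ¬ ∃ K : (Fin n → Bool) → (Fin p → Bool) → (Fin m → Bool),
        ∀ (i : Fin p) (x x' : Fin n → Bool) (v v' : Fin p → Bool),
          h i x = h i x' →
          (h i (f (K x v) x) = h i (f (K x' v') x') ↔ v i = v' i) := by
  rintro ⟨K, hK⟩
  set x : Fin n → Bool := fun _ => false with hx
  have hinj : Function.Injective (K x) := by
    intro v v' hvv
    funext i
    exact (hK i x x v v' rfl).mp (by rw [hvv])
  have hcard := Fintype.card_le_of_injective _ hinj
  simp only [Fintype.card_fun, Fintype.card_fin, Fintype.card_bool] at hcard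
  exact absurd hcard (by
    exact Nat.not_le.mpr (Nat.pow_lt_pow_right (by norm_num) hmp))
end

section
/- Let a Boolean control network with m inputs, n state variables, and p outputs be given by f : (Fin m → Bool) → (Fin n → Bool) → (Fin n → Bool) and h : Fin p → (Fin n → Bool) → Bool. Suppose that: (A) for every state x and every i : Fin p, either Rich i x holds, or there exists j : Bool such that Good i x u j holds for every input u; and (B) for every state x and every η : Fin p → Bool there exists an input u such that Good i x u (η i) holds for every i with Rich i x. Then there exists a state feedback K : (Fin n → Bool) → (Fin p → Bool) → (Fin m → Bool) such that the closed-loop BCN is one-step transition IO-decoupled in the sense of Definition 1. -/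
/-- `Good f h i x u j` : applying input `u` drives output `i` to the value `j`
from every state having the same `i`-th output as `x`. -/
def Good {m n p : ℕ} (f : (Fin m → Bool) → (Fin n → Bool) → (Fin n → Bool))
    (h : Fin p → (Fin n → Bool) → Bool)
    (i : Fin p) (x : Fin n → Bool) (u : Fin m → Bool) (j : Bool) : Prop :=
  ∀ x' : Fin n → Bool, h i x' = h i x → h i (f u x') = j

/-- `Rich f h i x` : for each target value `j` there is an input that is
`Good` for output `i` at state `x`. -/
def Rich {m n p : ℕ} (f : (Fin m → Bool) → (Fin n → Bool) → (Fin n → Bool))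
    (h : Fin p → (Fin n → Bool) → Bool)
    (i : Fin p) (x : Fin n → Bool) : Prop :=
  ∀ j : Bool, ∃ u : Fin m → Bool, Good f h i x u j

/-- Under conditions (A) and (B) there exists a state feedback `K`
such that the closed-loop BCN is one-step transition IO-decoupled (Definition 1). -/
theorem stmt_10 (m n p : ℕ)
    (f : (Fin m → Bool) → (Fin n → Bool) → (Fin n → Bool))
    (h : Fin p → (Fin n → Bool) → Bool)
    (hA : ∀ (x : Fin n → Bool) (i : Fin p),
        Rich f h i x ∨ ∃ j : Bool, ∀ u : Fin m → Bool, Good f h i x u j)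
    (hB : ∀ (x : Fin n → Bool) (η : Fin p → Bool),
        ∃ u : Fin m → Bool, ∀ i : Fin p, Rich f h i x → Good f h i x u (η i)) :
    ∃ K : (Fin n → Bool) → (Fin p → Bool) → (Fin m → Bool),
      ∀ (i : Fin p) (x x' : Fin n → Bool) (v v' : Fin p → Bool),
        h i x = h i x' → v i = v' i →
        h i (f (K x v) x) = h i (f (K x' v') x') := by
  choose K hK using hB
  refine ⟨K, fun i x x' v v' hx hv => ?_⟩
  have richIff : Rich f h i x ↔ Rich f h i x' := by
    constructor
    · intro hr j; obtain ⟨u, hu⟩ := hr j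
      exact ⟨u, fun y hy => hu y (hy.trans hx.symm)⟩
    · intro hr j; obtain ⟨u, hu⟩ := hr j
      exact ⟨u, fun y hy => hu y (hy.trans hx)⟩
  rcases hA x i with hr | ⟨j, hj⟩
  · have hr' := richIff.mp hr
    rw [hK x v i hr x rfl, hK x' v' i hr' x' rfl, hv]
  · rw [hj (K x v) x rfl, hj (K x' v') x' hx.symm]
end

section
/- Let a Boolean control network with m inputs, n state variables, and m outputs be given by f : (Fin m → Bool) → (Fin n → Bool) → (Fin n → Bool) and h : Fin m → (Fin n → Bool) → Bool. If the BCN is one-step transition IO-decoupled in the sense of Definition 1, then it is IO-decoupled in the sense of Definition 3: for every i : Fin m, every initial state x₀, and every pair of input sequences u û : ℕ → (Fin m → Bool) satisfying u t i = û t i for all t, the state trajectories X, X̂ defined by X 0 = X̂ 0 = x₀, X (t+1) = f (u t) (X t), X̂ (t+1) = f (û t) (X̂ t) satisfy h i (X t) = h i (X̂ t) for all t ∈ ℕ. -/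
/-- One-step transition IO-decoupling (Definition 1) implies
IO-decoupling in the sense of Definition 3: input sequences agreeing in their
`i`-th entries at all times produce trajectories from a common initial state
whose `i`-th outputs agree at all times. -/
theorem stmt_11 (m n : ℕ)
    (f : (Fin m → Bool) → (Fin n → Bool) → (Fin n → Bool))
    (h : Fin m → (Fin n → Bool) → Bool)
    (hdec : ∀ (i : Fin m) (x x' : Fin n → Bool) (u u' : Fin m → Bool),
        h i x = h i x' → u i = u' i → h i (f u x) = h i (f u' x')) :
    ∀ (i : Fin m) (x₀ : Fin n → Bool) (u u' : ℕ → (Fin m → Bool)),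
      (∀ t : ℕ, u t i = u' t i) →
      ∀ X X' : ℕ → (Fin n → Bool),
        X 0 = x₀ → X' 0 = x₀ →
        (∀ t : ℕ, X (t + 1) = f (u t) (X t)) →
        (∀ t : ℕ, X' (t + 1) = f (u' t) (X' t)) →
        ∀ t : ℕ, h i (X t) = h i (X' t) := by
  intro i x₀ u u' hu X X' hX0 hX'0 hX hX' t
  induction t with
  | zero => rw [hX0, hX'0]
  | succ t ih => rw [hX t, hX' t]; exact hdec i _ _ _ _ ih (hu t)
end

section
/- Let p ≤ n and let a Boolean control network with m inputs, n state variables, and p outputs be given by f : (Fin m → Bool) → (Fin n → Bool) → (Fin n → Bool) and h : Fin p → (Fin n → Bool) → Bool. Suppose that: (A) for every state x and every i : Fin p, either Rich i x holds, or there exists j : Bool such that Good i x u j holds for every input u; (B) for every state x and every η : Fin p → Bool there exists an input u such that Good i x u (η i) holds for every i with Rich i x; and (C) for every output vector b : Fin p → Bool the fiber {x : Fin n → Bool | ∀ i, h i x = b i} has cardinality 2^(n - p). Then the IO-decoupling problem in the sense of Definition 4 is solvable: there exist a state feedback K : (Fin n → Bool) → (Fin p → Bool) → (Fin m → Bool)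 and a map g : (Fin n → Bool) → (Fin (n - p) → Bool) such that the coordinate change x ↦ ((fun i => h i x), g x) is a bijection onto (Fin p → Bool) × (Fin (n - p) → Bool) and the closed-loop BCN is one-step transition IO-decoupled in the sense of Definition 1. -/
/-- Under conditions (A), (B) and the fiber-cardinality condition
(C), the IO-decoupling problem in the sense of Definition 4 is solvable: there
are a state feedback and a bijective coordinate change whose first `p` binary
coordinates are the outputs, with the closed loop one-step transition
IO-decoupled (Definition 1). -/
theorem stmt_13 (m n p : ℕ) (hpn : p ≤ n)
    (f : (Fin m → Bool) → (Fin n → Bool) → (Fin n → Bool))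
    (h : Fin p → (Fin n → Bool) → Bool)
    (hA : ∀ (x : Fin n → Bool) (i : Fin p),
        Rich f h i x ∨ ∃ j : Bool, ∀ u : Fin m → Bool, Good f h i x u j)
    (hB : ∀ (x : Fin n → Bool) (η : Fin p → Bool),
        ∃ u : Fin m → Bool, ∀ i : Fin p, Rich f h i x → Good f h i x u (η i))
    (hC : ∀ b : Fin p → Bool,
        Nat.card {x : Fin n → Bool | ∀ i, h i x = b i} = 2 ^ (n - p)) :
    ∃ (K : (Fin n → Bool) → (Fin p → Bool) → (Fin m → Bool))
      (g : (Fin n → Bool) → (Fin (n - p) → Bool)),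
      Function.Bijective
        (fun x : Fin n → Bool => ((fun i => h i x : Fin p → Bool), g x)) ∧
      (∀ (i : Fin p) (x x' : Fin n → Bool) (v v' : Fin p → Bool),
          h i x = h i x' → v i = v' i →
          h i (f (K x v) x) = h i (f (K x' v') x')) := by
  classical
  -- For each output value `b`, an equivalence between the fiber and `Fin (n-p) → Bool`.
  have hcard : ∀ b : Fin p → Bool,
      Nonempty ({x : Fin n → Bool | ∀ i, h i x = b i} ≃ (Fin (n - p) → Bool)) := by
    intro b
    rw [← Finite.card_eq, hC b]
    simp [Nat.card_eq_fintype_card]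
  have e : ∀ b : Fin p → Bool,
      {x : Fin n → Bool | ∀ i, h i x = b i} ≃ (Fin (n - p) → Bool) :=
    fun b => (hcard b).some
  refine ⟨fun x v => (hB x v).choose,
    fun x => e (fun i => h i x) ⟨x, fun _ => rfl⟩, ?_, ?_⟩
  · -- Bijectivity via surjectivity + cardinality
    rw [Fintype.bijective_iff_surjective_and_card]
    constructor
    · rintro ⟨b, y⟩
      rcases hsy : (e b).symm y with ⟨x, hx⟩
      have hb : b = fun i => h i x := funext fun i => (hx i).symm
      subst hb
      refine ⟨x, ?_⟩
      simp only [Prod.mk.injEq]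
      refine ⟨trivial, ?_⟩
      have : (⟨x, fun _ => rfl⟩ : {x' : Fin n → Bool | ∀ i, h i x' = h i x})
          = (e (fun i => h i x)).symm y := by
        rw [hsy]
      rw [this, Equiv.apply_symm_apply]
    · have h1 : Fintype.card (Fin n → Bool) = 2 ^ n := by simp
      have h2 : Fintype.card ((Fin p → Bool) × (Fin (n - p) → Bool))
          = 2 ^ p * 2 ^ (n - p) := by simp
      rw [h1, h2, ← pow_add, Nat.add_sub_cancel' hpn]
  · intro i x x' v v' hxx' hvv'
    by_cases hR : Rich f h i x
    · have hR' : Rich f h i x' := by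
        intro j
        obtain ⟨u, hu⟩ := hR j
        exact ⟨u, fun y hy => hu y (hy.trans hxx'.symm)⟩
      have e1 : h i (f ((hB x v).choose) x) = v i :=
        (hB x v).choose_spec i hR x rfl
      have e2 : h i (f ((hB x' v').choose) x') = v' i :=
        (hB x' v').choose_spec i hR' x' rfl
      rw [e1, e2, hvv']
    · rcases hA x i with hR2 | ⟨j, hj⟩
      · exact absurd hR2 hR
      · have e1 : h i (f ((hB x v).choose) x) = j := hj _ x rfl
        have e2 : h i (f ((hB x' v').choose) x') = j := hj _ x' hxx'.symm
        rw [e1, e2]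
end
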